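/- Let M be a regular (T3) topological space and X ⊆ M any subset. Then the space M(X) is regular, where M(X) is the set M equipped with the topology generated by the open sets of M together with the singletons {x} for x ∈ X. -/

import Mathlib

/-! Points of `X` are isolated in `M(X)`, while every other point keeps its neighbourhood filter
from `M`. Closed sets of `M` stay closed in the finer topology `M(X)`, so closed neighbourhoods in
`M` of points outside `X` witness regularity there, and `{x}` is a closed neighbourhood of each
`x ∈ X` because `M(X)` inherits the `T₁` property of `M`. -/

open Topology

/-- The Michael-line-like topology `M(X)`: the topology generated by the open
sets of `M` together with the singletons `{x}` for `x ∈ X`. -/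
def michael {M : Type*} (t : TopologicalSpace M) (X : Set M) : TopologicalSpace M :=
  TopologicalSpace.generateFrom ({U | IsOpen[t] U} ∪ {S | ∃ x ∈ X, S = {x}})

section Michael

open Filter Set

variable {M : Type*} (t : TopologicalSpace M) {X : Set M} {a : M}

theorem michael_le (X : Set M) : michael t X ≤ t := fun _ hU =>
  TopologicalSpace.isOpen_generateFrom_of_mem (Or.inl hU)

theorem nhds_michael_of_mem (ha : a ∈ X) : @nhds M (michael t X) a = pure a :=
  (@isOpen_singleton_iff_nhds_eq_pure M (michael t X) a).mp <|
    TopologicalSpace.isOpen_generateFrom_of_mem (Or.inr ⟨a, ha, rfl⟩)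

theorem nhds_michael_of_notMem (ha : a ∉ X) : @nhds M (michael t X) a = 𝓝 a := by
  refine le_antisymm (nhds_mono (michael_le t X)) ?_
  rw [michael, TopologicalSpace.nhds_generateFrom, nhds_def]
  refine biInf_mono ?_
  rintro s ⟨has, hs | ⟨x, hx, rfl⟩⟩
  · exact ⟨has, hs⟩
  · exact absurd (mem_singleton_iff.mp has ▸ hx) ha

theorem t1Space_michael [T1Space M] (X : Set M) : @T1Space M (michael t X) :=
  t1Space_antitone (michael_le t X) ‹_›

theorem regularSpace_michael [RegularSpace M] [T1Space M] (X : Set M) :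
    @RegularSpace M (michael t X) := by
  refine @RegularSpace.of_exists_mem_nhds_isClosed_subset M (michael t X) fun a s hs => ?_
  by_cases ha : a ∈ X
  · rw [nhds_michael_of_mem t ha] at hs ⊢
    exact ⟨{a}, mem_pure.mpr rfl, @isClosed_singleton M (michael t X) (t1Space_michael t X) a,
      singleton_subset_iff.mpr hs⟩
  · rw [nhds_michael_of_notMem t ha] at hs ⊢
    obtain ⟨c, hc, hcc, hcs⟩ := exists_mem_nhds_isClosed_subset hs
    exact ⟨c, hc, hcc.mono (michael_le t X), hcs⟩

end Michael

/-- If `M` is regular (T3), then `M(X)` is regular (T3) for any `X ⊆ M`. -/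
theorem stmt6 {M : Type*} [t : TopologicalSpace M] [T3Space M] (X : Set M) :
    @T3Space M (michael t X) :=
  @instT3Space M (michael t X) (@T1Space.t0Space M (michael t X) (t1Space_michael t X))
    (regularSpace_michael t X)
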